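/- If f = Σ_{i=0}^{m−1} dⁱvᵢ where each vᵢ is a Schwartz solenoidal symmetric (m−i)-tensor field (δvᵢ = 0), then the transversal Radon transform of f vanishes: 𝒯ᵐ f(ω, p) = ∫_{H_{ω,p}} ⟨f(x), ω^{⊙m}⟩ dx = 0 for all unit vectors ω and p ∈ ℝ. -/

import Mathlib

open MeasureTheory
open scoped RealInnerProductSpace
noncomputable section

abbrev E (n : ℕ) := EuclideanSpace ℝ (Fin n)

/-- Tensor field of order `m` on ℝⁿ, given by its components. -/
abbrev TF (n m : ℕ) := E n → (Fin m → Fin n) → ℝ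

/-- Partial derivative in the `i`-th coordinate direction. -/
def pd {n : ℕ} (i : Fin n) (g : E n → ℝ) (x : E n) : ℝ :=
  fderiv ℝ g x (EuclideanSpace.single i 1)

/-- All components of the tensor field are Schwartz functions. -/
def IsSchwartzTF {n m : ℕ} (f : TF n m) : Prop :=
  ∀ idx, ∃ g : SchwartzMap (E n) ℝ, (fun x => f x idx) = ⇑g

/-- The tensor field is symmetric. -/
def IsSymTF {n m : ℕ} (f : TF n m) : Prop :=
  ∀ (x : E n) (σ : Equiv.Perm (Fin m)) (idx : Fin m → Fin n), f x (idx ∘ σ) = f x idx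

/-- Divergence δ of a tensor field (contraction of the derivative in the last index). -/
def div' {n m : ℕ} : TF n m → TF n (m - 1) :=
  match m with
  | 0 => fun _ => fun _ _ => 0
  | _ + 1 => fun u x idx => ∑ i : Fin n, pd i (fun y => u y (Fin.snoc idx i)) x

/-- Iterated divergence δ^k. -/
def divIter {n m : ℕ} : (k : ℕ) → TF n m → TF n (m - k)
  | 0, u => u
  | k + 1, u => div' (divIter k u)

/-- Symmetrization of an `m`-tensor (average over permutations of the indices). -/
def symz {n m : ℕ} (T : (Fin m → Fin n) → ℝ) : (Fin m → Fin n) → ℝ :=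
  fun idx => (m.factorial : ℝ)⁻¹ * ∑ σ : Equiv.Perm (Fin m), T (idx ∘ σ)

/-- Symmetrized derivative (inner differentiation) d. -/
def dsym {n m : ℕ} (v : TF n m) : TF n (m + 1) :=
  fun x => symz (fun idx => pd (idx (Fin.last m)) (fun y => v y (idx ∘ Fin.castSucc)) x)

/-- Iterated symmetrized derivative d^k. -/
def dIter {n m : ℕ} : (k : ℕ) → TF n m → TF n (m + k)
  | 0, v => v
  | k + 1, v => dsym (dIter k v)

/-- Componentwise Laplacian. -/
def lap {n m : ℕ} (u : TF n m) : TF n m :=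
  fun x idx => ∑ i : Fin n, pd i (fun y => pd i (fun z => u z idx) y) x

/-- Full contraction of an `m`-tensor field with a family of `m` vectors
(equivalently, with the symmetric product of those vectors when the field is symmetric). -/
def contr {n m : ℕ} (f : TF n m) (v : Fin m → E n) (x : E n) : ℝ :=
  ∑ idx : Fin m → Fin n, f x idx * ∏ j, v j (idx j)

/-- Contraction with a vector `w` in the last index. -/
def jv {n m : ℕ} (w : E n) : TF n m → TF n (m - 1) :=
  match m with
  | 0 => fun _ => fun _ _ => 0
  | _ + 1 => fun u x idx => ∑ i : Fin n, w i * u x (Fin.snoc idx i)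

/-- Iterated contraction with `w` in the last `k` indices. -/
def jvIter {n m : ℕ} (w : E n) : (k : ℕ) → TF n m → TF n (m - k)
  | 0, u => u
  | k + 1, u => jv w (jvIter w k u)

/-- Integral of a scalar function over the hyperplane `{x : ⟪x, ω⟫ = p}`. -/
def hypInt {n : ℕ} (h : E n → ℝ) (ω : E n) (p : ℝ) : ℝ :=
  ∫ y : ((ℝ ∙ ω)ᗮ : Submodule ℝ (E n)), h (p • ω + (y : E n))

/-- The transversal Radon transform 𝒯^m of a symmetric m-tensor field. -/
def TRT {n m : ℕ} (g : TF n m) (ω : E n) (p : ℝ) : ℝ :=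
  hypInt (contr g (fun _ => ω)) ω p

/-!
Contracting with `ω^{⊙k}` turns the symmetrized derivative `d` into the directional derivative
`∂_ω`, and the integral of `∂_ω g` over `H_{ω,p}` is the `p`-derivative of the integral of `g`.
So it suffices to show that the hyperplane integrals of `⟨v, ω^{⊙k}⟩` vanish for a solenoidal
Schwartz field `v`. Write `⟨v, ω^{⊙k}⟩ = ∑ⱼ ωⱼ Vⱼ`, where `Vⱼ` is the contraction of `v` with
`ω^{⊙(k-1)} ⊗ eⱼ`; then `δv = 0` says that the vector field `(Vⱼ)` is divergence free. Its flux
through `H_{ω,p}` is therefore independent of `p`, because tangential derivatives integrate to zero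
over a hyperplane, and it tends to `0` as `p → ∞`.
-/

open Filter Topology Module
open scoped SchwartzMap LineDeriv

theorem one_add_norm_le_mul_one_add_norm_add {F : Type*} [SeminormedAddCommGroup F] (a y : F) :
    1 + ‖y‖ ≤ (1 + ‖a‖) * (1 + ‖a + y‖) := by
  have : ‖y‖ ≤ ‖a‖ + ‖a + y‖ := by
    simpa [add_comm] using norm_add_le (-a) (a + y)
  nlinarith [norm_nonneg a, norm_nonneg (a + y)]

theorem SchwartzMap.exists_norm_apply_add_le {F G : Type*} [NormedAddCommGroup F] [NormedSpace ℝ F]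
    [NormedAddCommGroup G] [NormedSpace ℝ G] (g : 𝓢(F, G)) (k : ℕ) :
    ∃ C, 0 ≤ C ∧ ∀ a y : F, ‖g (a + y)‖ ≤ C * (1 + ‖a‖) ^ k * ((1 + ‖y‖) ^ k)⁻¹ := by
  obtain ⟨C, hC⟩ : ∃ C, ∀ x, (1 + ‖x‖) ^ k * ‖g x‖ ≤ C :=
    ⟨_, fun x => by
      simpa using g.one_add_le_sup_seminorm_apply (𝕜 := ℝ) (m := (k, 0)) le_rfl le_rfl x⟩
  refine ⟨C, (mul_nonneg (by positivity) (norm_nonneg _)).trans (hC 0), fun a y => ?_⟩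
  rw [← div_eq_mul_inv, le_div_iff₀ (by positivity)]
  calc ‖g (a + y)‖ * (1 + ‖y‖) ^ k
      ≤ ‖g (a + y)‖ * ((1 + ‖a‖) ^ k * (1 + ‖a + y‖) ^ k) := by
        rw [← mul_pow]; gcongr; exact one_add_norm_le_mul_one_add_norm_add a y
    _ = (1 + ‖a‖) ^ k * ((1 + ‖a + y‖) ^ k * ‖g (a + y)‖) := by ring
    _ ≤ (1 + ‖a‖) ^ k * C := by gcongr; exact hC _
    _ = C * (1 + ‖a‖) ^ k := mul_comm _ _

section Hyperplane

variable {F : Type*} [NormedAddCommGroup F] [InnerProductSpace ℝ F] [FiniteDimensional ℝ F]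
  [MeasurableSpace F] [BorelSpace F] {ω : F}

theorem integrable_one_add_norm_pow_inv_orthogonal (hω : ω ≠ 0) :
    Integrable (fun y : (ℝ ∙ ω)ᗮ => ((1 + ‖y‖) ^ finrank ℝ F)⁻¹) := by
  have hdim : finrank ℝ (ℝ ∙ ω)ᗮ + 1 = finrank ℝ F := by
    rw [← finrank_span_singleton (K := ℝ) hω, add_comm]
    exact Submodule.finrank_add_finrank_orthogonal _
  refine (integrable_one_add_norm (E := (ℝ ∙ ω)ᗮ) (μ := volume) (r := finrank ℝ F)
    (by rw [← hdim]; push_cast; linarith)).congr (.of_forall fun y => ?_)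
  simp

theorem SchwartzMap.integrable_comp_add_orthogonal (hω : ω ≠ 0) (g : 𝓢(F, ℝ)) (a : F) :
    Integrable (fun y : (ℝ ∙ ω)ᗮ => g (a + y)) := by
  obtain ⟨C, -, hC⟩ := g.exists_norm_apply_add_le (finrank ℝ F)
  exact ((integrable_one_add_norm_pow_inv_orthogonal hω).const_mul
    (C * (1 + ‖a‖) ^ finrank ℝ F)).mono' (by fun_prop) (.of_forall fun y => hC a y)

theorem SchwartzMap.hasDerivAt_integral_orthogonal (hω : ω ≠ 0) (g : 𝓢(F, ℝ)) (c w : F) (s₀ : ℝ) :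
    HasDerivAt (fun s => ∫ y : (ℝ ∙ ω)ᗮ, g (c + s • w + y))
      (∫ y : (ℝ ∙ ω)ᗮ, ∂_{w} g (c + s₀ • w + y)) s₀ := by
  obtain ⟨C, hC₀, hC⟩ := (∂_{w} g).exists_norm_apply_add_le (finrank ℝ F)
  obtain ⟨R, hR⟩ : ∃ R, ∀ s ∈ Metric.ball s₀ 1, ‖c + s • w‖ ≤ R := by
    refine ⟨‖c‖ + (|s₀| + 1) * ‖w‖, fun s hs => ?_⟩
    have hs' : |s| ≤ |s₀| + 1 := by
      have := abs_sub_abs_le_abs_sub s s₀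
      rw [Metric.mem_ball, Real.dist_eq] at hs
      linarith
    calc ‖c + s • w‖ ≤ ‖c‖ + |s| * ‖w‖ := by simpa [norm_smul] using norm_add_le c (s • w)
      _ ≤ _ := by gcongr
  refine (hasDerivAt_integral_of_dominated_loc_of_deriv_le
    (F := fun s (y : (ℝ ∙ ω)ᗮ) => g (c + s • w + y))
    (F' := fun s (y : (ℝ ∙ ω)ᗮ) => ∂_{w} g (c + s • w + y)) (Metric.ball_mem_nhds s₀ one_pos)
    (.of_forall fun s => by fun_prop) (g.integrable_comp_add_orthogonal hω _) (by fun_prop)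
    (.of_forall fun y s hs => (hC _ y).trans ?_)
    ((integrable_one_add_norm_pow_inv_orthogonal hω).const_mul (C * (1 + R) ^ finrank ℝ F))
    (.of_forall fun y s _ => ?_)).2
  · have hcs := hR s hs
    have hR₀ : 0 ≤ 1 + R := by linarith [norm_nonneg (c + s • w)]
    gcongr
    exact le_rfl
  · exact (g.hasFDerivAt _).comp_hasDerivAt s
      ((((hasDerivAt_id s).smul_const w).const_add c).add_const (y : F) |>.congr_deriv (by simp))

theorem SchwartzMap.integral_orthogonal_lineDeriv_eq_zero_of_forall (hω : ω ≠ 0) (g : 𝓢(F, ℝ))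
    (hg : ∀ q : ℝ, ∫ y : (ℝ ∙ ω)ᗮ, g (q • ω + y) = 0) (p : ℝ) :
    ∫ y : (ℝ ∙ ω)ᗮ, ∂_{ω} g (p • ω + y) = 0 := by
  have h := g.hasDerivAt_integral_orthogonal hω 0 ω p
  simp only [zero_add, hg] at h
  exact h.unique (hasDerivAt_const p 0)

theorem SchwartzMap.integral_orthogonal_lineDeriv_eq_zero (hω : ω ≠ 0) (g : 𝓢(F, ℝ)) (c : F)
    {t : F} (ht : t ∈ (ℝ ∙ ω)ᗮ) :
    ∫ y : (ℝ ∙ ω)ᗮ, ∂_{t} g (c + y) = 0 := by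
  have htranslate : ∀ s : ℝ, ∫ y : (ℝ ∙ ω)ᗮ, g (c + s • t + y) = ∫ y : (ℝ ∙ ω)ᗮ, g (c + y) :=
    fun s => by
      simpa [add_assoc] using integral_add_left_eq_self (fun y : (ℝ ∙ ω)ᗮ => g (c + y))
        (s • ⟨t, ht⟩ : (ℝ ∙ ω)ᗮ)
  have h := g.hasDerivAt_integral_orthogonal hω c t 0
  simp only [htranslate, zero_smul, add_zero] at h
  exact h.unique (hasDerivAt_const 0 _)

theorem SchwartzMap.tendsto_integral_orthogonal_atTop (hω : ω ≠ 0) (g : 𝓢(F, ℝ)) :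
    Tendsto (fun q : ℝ => ∫ y : (ℝ ∙ ω)ᗮ, g (q • ω + y)) atTop (𝓝 0) := by
  obtain ⟨C, hC₀, hC⟩ := g.exists_norm_apply_add_le (finrank ℝ F)
  have hpyth : ∀ (q : ℝ) (y : (ℝ ∙ ω)ᗮ), ‖q • ω + y‖ ^ 2 = q ^ 2 * ‖ω‖ ^ 2 + ‖y‖ ^ 2 := by
    intro q y
    have : ⟪q • ω, (y : F)⟫ = 0 := Submodule.inner_right_of_mem_orthogonal
      (Submodule.smul_mem _ q (Submodule.mem_span_singleton_self ω)) y.2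
    rw [← sq_abs q, ← Real.norm_eq_abs, ← mul_pow, ← norm_smul]
    simpa [sq] using norm_add_sq_eq_norm_sq_add_norm_sq_real this
  have hbound : ∀ (q : ℝ) (y : (ℝ ∙ ω)ᗮ), ‖g (q • ω + y)‖ ≤ C * ((1 + ‖y‖) ^ finrank ℝ F)⁻¹ := by
    intro q y
    have hy : ‖y‖ ≤ ‖q • ω + y‖ := by
      rw [← pow_le_pow_iff_left₀ (norm_nonneg _) (norm_nonneg _) two_ne_zero, hpyth]
      nlinarith [sq_nonneg (q * ‖ω‖)]
    have := hC 0 (q • ω + y)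
    simp only [zero_add, norm_zero, add_zero, one_pow, mul_one] at this
    exact this.trans (by gcongr)
  have hlim : ∀ y : (ℝ ∙ ω)ᗮ, Tendsto (fun q : ℝ => g (q • ω + y)) atTop (𝓝 0) := by
    intro y
    refine g.tendsto_cocompact.comp ?_
    rw [← Metric.cobounded_eq_cocompact, ← tendsto_norm_atTop_iff_cobounded]
    refine tendsto_atTop_mono' _ (eventually_ge_atTop 0 |>.mono fun q hq => ?_)
      (tendsto_id.atTop_mul_const (norm_pos_iff.2 hω))
    show q * ‖ω‖ ≤ ‖q • ω + y‖
    rw [← pow_le_pow_iff_left₀ (by positivity) (norm_nonneg _) two_ne_zero, hpyth]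
    nlinarith [sq_nonneg ‖y‖]
  simpa using tendsto_integral_filter_of_dominated_convergence _ (.of_forall fun q => by fun_prop)
    (.of_forall fun q => .of_forall fun y => hbound q y)
    ((integrable_one_add_norm_pow_inv_orthogonal hω).const_mul C) (.of_forall hlim)

theorem integral_orthogonal_sum_inner_mul_eq_zero_of_sum_lineDeriv_eq_zero {ι : Type*} [Fintype ι]
    (hω : ‖ω‖ = 1) (V : ι → 𝓢(F, ℝ)) (e : ι → F) (hdiv : ∀ z, ∑ i, ∂_{e i} (V i) z = 0)
    (p : ℝ) :
    ∫ y : (ℝ ∙ ω)ᗮ, ∑ i, ⟪e i, ω⟫ * V i (p • ω + y) = 0 := by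
  have hω₀ : ω ≠ 0 := by rintro rfl; simp at hω
  set g : 𝓢(F, ℝ) := ∑ i, ⟪e i, ω⟫ • V i
  have hg : ∀ x, g x = ∑ i, ⟪e i, ω⟫ * V i x := fun x => by simp [g]
  have htangent : ∀ i, e i - ⟪e i, ω⟫ • ω ∈ (ℝ ∙ ω)ᗮ := fun i => by
    rw [Submodule.mem_orthogonal_singleton_iff_inner_right, inner_sub_right, real_inner_smul_right,
      real_inner_self_eq_norm_sq, hω, real_inner_comm]
    ring
  have hderiv : ∀ x, ∂_{ω} g x = -∑ i, ∂_{e i - ⟪e i, ω⟫ • ω} (V i) x := fun x => by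
    have hsplit : ∀ i,
        ∂_{e i - ⟪e i, ω⟫ • ω} (V i) x = ∂_{e i} (V i) x - ⟪e i, ω⟫ * ∂_{ω} (V i) x := fun i => by
      simp only [SchwartzMap.lineDerivOp_apply_eq_fderiv, map_sub, map_smul, smul_eq_mul]
    rw [Finset.sum_congr rfl fun i _ => hsplit i, Finset.sum_sub_distrib, hdiv, zero_sub, neg_neg]
    simp [g, LineDeriv.lineDerivOp_sum, LineDeriv.lineDerivOp_smul]
  have hconst : ∀ q, HasDerivAt (fun s => ∫ y : (ℝ ∙ ω)ᗮ, g (s • ω + y)) 0 q := fun q => by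
    have h := g.hasDerivAt_integral_orthogonal hω₀ 0 ω q
    simp only [zero_add, hderiv] at h
    rwa [integral_neg,
      integral_finsetSum _ fun i _ =>
        (∂_{e i - ⟪e i, ω⟫ • ω} (V i)).integrable_comp_add_orthogonal hω₀ _,
      Finset.sum_eq_zero fun i _ =>
        (V i).integral_orthogonal_lineDeriv_eq_zero hω₀ _ (htangent i), neg_zero] at h
  have hΦ : ∀ q, ∫ y : (ℝ ∙ ω)ᗮ, g (q • ω + y) = ∫ y : (ℝ ∙ ω)ᗮ, g (p • ω + y) := fun q =>
    is_const_of_deriv_eq_zero (fun q => (hconst q).differentiableAt) (fun q => (hconst q).deriv) q p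
  simp_rw [← hg]
  exact tendsto_nhds_unique tendsto_const_nhds ((g.tendsto_integral_orthogonal_atTop hω₀).congr hΦ)

end Hyperplane

section TensorAlgebra

variable {n : ℕ}

theorem sum_symz_mul {m : ℕ} (T c : (Fin m → Fin n) → ℝ)
    (hc : ∀ (σ : Equiv.Perm (Fin m)) idx, c (idx ∘ σ) = c idx) :
    ∑ idx, symz T idx * c idx = ∑ idx, T idx * c idx := by
  have hperm : ∀ σ : Equiv.Perm (Fin m),
      ∑ idx : Fin m → Fin n, T (idx ∘ σ) * c idx = ∑ idx, T idx * c idx := fun σ => by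
    refine Fintype.sum_equiv (Equiv.arrowCongr σ.symm (Equiv.refl (Fin n))) _ _ fun idx => ?_
    change _ = T (idx ∘ σ) * c (idx ∘ σ)
    rw [hc]
  simp only [symz, mul_assoc, ← Finset.mul_sum, Finset.sum_mul]
  rw [Finset.sum_comm]
  simp only [hperm, Finset.sum_const, Finset.card_univ, Fintype.card_perm, Fintype.card_fin,
    nsmul_eq_mul, ← mul_assoc]
  rw [inv_mul_cancel₀ (by positivity), one_mul]

theorem contr_succ {m : ℕ} (u : TF n (m + 1)) (v : Fin (m + 1) → E n) (x : E n) :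
    contr u v x = ∑ i, v (Fin.last m) i *
      contr (fun y idx => u y (Fin.snoc idx i)) (fun j => v j.castSucc) x := by
  rw [contr, ← (Fin.snocEquiv fun _ => Fin n).sum_comp, Fintype.sum_prod_type]
  simp [Fin.snocEquiv, Fin.prod_univ_castSucc, contr, Finset.mul_sum, mul_comm, mul_left_comm]

theorem fderiv_apply_eq_sum_mul_pd (g : E n → ℝ) (x w : E n) :
    fderiv ℝ g x w = ∑ i, w i * pd i g x := by
  conv_lhs => rw [← (EuclideanSpace.basisFun (Fin n) ℝ).sum_repr w]
  simp [pd, map_sum, map_smul]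

theorem fderiv_contr {m : ℕ} {u : TF n m} {x : E n}
    (hu : ∀ idx, DifferentiableAt ℝ (fun y => u y idx) x) (v : Fin m → E n) (w : E n) :
    fderiv ℝ (contr u v) x w = ∑ idx, fderiv ℝ (fun y => u y idx) x w * ∏ j, v j (idx j) := by
  have : contr u v = fun y => ∑ idx, u y idx * ∏ j, v j (idx j) := rfl
  rw [this, fderiv_fun_sum fun idx _ => (hu idx).mul_const _]
  simp [fderiv_mul_const (hu _), mul_comm]

theorem contr_dsym {m : ℕ} {u : TF n m} {x : E n}
    (hu : ∀ idx, DifferentiableAt ℝ (fun y => u y idx) x) (ω : E n) :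
    contr (dsym u) (fun _ => ω) x = fderiv ℝ (contr u fun _ => ω) x ω := by
  have hsymz : contr (dsym u) (fun _ => ω) x =
      contr (fun _ J => pd (J (Fin.last m)) (fun y => u y (J ∘ Fin.castSucc)) x) (fun _ => ω) x :=
    sum_symz_mul _ _ fun σ idx => Equiv.prod_comp σ fun j => ω (idx j)
  rw [hsymz, contr_succ, fderiv_contr hu]
  simp only [contr, Fin.snoc_last, Fin.snoc_comp_castSucc, fderiv_apply_eq_sum_mul_pd,
    Finset.mul_sum, Finset.sum_mul]
  rw [Finset.sum_comm]
  simp only [mul_comm, mul_left_comm]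

theorem contr_div' {m : ℕ} {u : TF n (m + 1)} {x : E n}
    (hu : ∀ idx, DifferentiableAt ℝ (fun y => u y idx) x) (v : Fin m → E n) :
    contr (div' u) v x = ∑ i, pd i (contr (fun y idx => u y (Fin.snoc idx i)) v) x := by
  simp only [pd, fderiv_contr fun idx => hu _]
  simp only [contr, div', pd, Finset.sum_mul]
  exact Finset.sum_comm

theorem sum_mul_prod_comp_cast_eq_contr {M m : ℕ} (h : M = m) (g : TF n M) (ω x : E n) :
    ∑ idx : Fin m → Fin n, g x (fun j => idx (Fin.cast h j)) * ∏ j, ω (idx j)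
      = contr g (fun _ => ω) x := by
  subst h
  rfl

end TensorAlgebra

section SchwartzTensor

variable {n m : ℕ} {u : TF n m}

theorem IsSchwartzTF.differentiable (hu : IsSchwartzTF u) (idx : Fin m → Fin n) :
    Differentiable ℝ fun x => u x idx := by
  obtain ⟨g, hg⟩ := hu idx
  exact hg ▸ g.differentiable

theorem IsSchwartzTF.exists_contr_eq (hu : IsSchwartzTF u) (v : Fin m → E n) :
    ∃ g : 𝓢(E n, ℝ), contr u v = g := by
  choose G hG using hu
  refine ⟨∑ idx, (∏ j, v j (idx j)) • G idx, funext fun x => ?_⟩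
  simp [contr, ← hG, mul_comm]

theorem IsSchwartzTF.dsym (hu : IsSchwartzTF u) : IsSchwartzTF (dsym u) := by
  choose G hG using hu
  refine fun idx => ⟨((m + 1).factorial : ℝ)⁻¹ • ∑ σ : Equiv.Perm (Fin (m + 1)),
    ∂_{EuclideanSpace.single (idx (σ (Fin.last m))) (1 : ℝ)} (G (idx ∘ σ ∘ Fin.castSucc)),
    funext fun x => ?_⟩
  simp only [_root_.dsym, symz, pd, hG]
  simp [SchwartzMap.lineDerivOp_apply_eq_fderiv, Function.comp_assoc]

theorem IsSchwartzTF.dIter (hu : IsSchwartzTF u) (k : ℕ) : IsSchwartzTF (dIter k u) := by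
  induction k with
  | zero => exact hu
  | succ k ih => exact ih.dsym

end SchwartzTensor

section TransversalRadon

variable {n : ℕ} {ω : E n}

theorem IsSchwartzTF.integrable_contr_add_orthogonal {m : ℕ} {u : TF n m} (hu : IsSchwartzTF u)
    (hω : ω ≠ 0) (v : Fin m → E n) (a : E n) :
    Integrable fun y : (ℝ ∙ ω)ᗮ => contr u v (a + y) := by
  obtain ⟨g, hg⟩ := hu.exists_contr_eq v
  exact hg ▸ g.integrable_comp_add_orthogonal hω a

theorem hypInt_contr_eq_zero_of_div'_eq_zero (hω : ‖ω‖ = 1) {m : ℕ} {u : TF n (m + 1)}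
    (hu : IsSchwartzTF u) (hdiv : div' u = fun _ _ => 0) (p : ℝ) :
    hypInt (contr u fun _ => ω) ω p = 0 := by
  choose V hV using fun i => (show IsSchwartzTF fun y idx => u y (Fin.snoc idx i) from
    fun idx => hu _).exists_contr_eq fun _ => ω
  have hsplit : ∀ x, contr u (fun _ => ω) x = ∑ i, ⟪EuclideanSpace.single i 1, ω⟫ * V i x :=
    fun x => by simp [contr_succ, hV, EuclideanSpace.inner_single_left]
  have hdivV : ∀ z, ∑ i, ∂_{EuclideanSpace.single i (1 : ℝ)} (V i) z = 0 := fun z => by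
    have := contr_div' (fun idx => (hu.differentiable idx).differentiableAt (x := z)) fun _ => ω
    rw [hdiv] at this
    simpa [contr, pd, hV, SchwartzMap.lineDerivOp_apply_eq_fderiv] using this.symm
  simp only [hypInt, hsplit]
  exact integral_orthogonal_sum_inner_mul_eq_zero_of_sum_lineDeriv_eq_zero hω V _ hdivV p

theorem hypInt_contr_dIter_eq_zero (hω : ‖ω‖ = 1) {M : ℕ} (hM : M ≠ 0) {u : TF n M}
    (hu : IsSchwartzTF u) (hdiv : div' u = fun _ _ => 0) (k : ℕ) (p : ℝ) :
    hypInt (contr (dIter k u) fun _ => ω) ω p = 0 := by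
  obtain ⟨m, rfl⟩ := Nat.exists_eq_succ_of_ne_zero hM
  induction k generalizing p with
  | zero => exact hypInt_contr_eq_zero_of_div'_eq_zero hω hu hdiv p
  | succ k ih =>
    obtain ⟨g, hg⟩ := (hu.dIter k).exists_contr_eq fun _ => ω
    have hstep : contr (dIter (k + 1) u) (fun _ => ω) = ∂_{ω} g := funext fun x => by
      rw [SchwartzMap.lineDerivOp_apply_eq_fderiv, ← hg]
      exact contr_dsym (fun idx => ((hu.dIter k).differentiable idx).differentiableAt) ω
    rw [hg] at ih
    rw [hstep]
    exact g.integral_orthogonal_lineDeriv_eq_zero_of_forall (by rintro rfl; simp at hω) ih p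

end TransversalRadon

/-- If `f = ∑_{i=0}^{m-1} dⁱ vᵢ` with each `vᵢ` a Schwartz solenoidal symmetric
`(m-i)`-tensor field, then the transversal Radon transform of `f` vanishes. -/
theorem stmt13 {n m : ℕ} (v : (i : Fin m) → TF n (m - (i : ℕ)))
    (hS : ∀ i, IsSchwartzTF (v i))
    (hsol : ∀ i, div' (v i) = fun _ _ => 0)
    (f : TF n m)
    (hf : ∀ x idx, f x idx
      = ∑ i : Fin m, dIter (i : ℕ) (v i) x
          (fun j => idx (Fin.cast (by have := i.isLt; omega : m - (i : ℕ) + (i : ℕ) = m) j)))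
    (ω : E n) (hω : ‖ω‖ = 1) (p : ℝ) :
    TRT f ω p = 0 := by
  have hω₀ : ω ≠ 0 := by rintro rfl; simp at hω
  have hsplit : ∀ x, contr f (fun _ => ω) x = ∑ i : Fin m, contr (dIter i (v i)) (fun _ => ω) x :=
    fun x => by
      simp only [contr, hf, Finset.sum_mul]
      rw [Finset.sum_comm]
      exact Finset.sum_congr rfl fun i _ => sum_mul_prod_comp_cast_eq_contr _ _ ω x
  rw [TRT, hypInt]
  simp only [hsplit]
  rw [integral_finsetSum _ fun i _ => ((hS i).dIter i).integrable_contr_add_orthogonal hω₀ _ _]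
  exact Finset.sum_eq_zero fun i _ =>
    hypInt_contr_dIter_eq_zero hω (by omega) (hS i) (hsol i) i p
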